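/- arXiv:2511.15374 — 2 statements merged into one kernel-verified Lean document; each statement's English description precedes it below -/
import Mathlib

section
/- Let $\{f_k\}$ and $\{\alpha_k\}$ be nonnegative sequences of random variables adapted to a filtration $\{\mathscr{F}_k\}$. If $E[f_{k+1}\mid\mathscr{F}_k] \le f_k + \alpha_k$ almost surely for all $k \ge 1$, and $\sum_{i=1}^\infty \alpha_i < \infty$ almost surely, then $f_k$ converges almost surely to a finite limit. -/
open MeasureTheory Filter

open scoped Topology

/-!
Subtracting the accumulated perturbations makes `f n - ∑_{i<n} a i` a supermartingale; its
negative is a submartingale bounded above by the *predictable* process `∑_{i≤n} a i`. Stopped at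
the first time this bound reaches `r`, it is a submartingale started at `0` and bounded above by
`r`, hence bounded in L¹ and a.s. convergent. On the event `∑ a i < r` it is never stopped, and
the partial sums of `a` converge a.s., so `f` converges a.s. The hypothesis only holds from
`k = 1` on, so all of this is run on the shifted filtration `ℱ (n + 1)`.
-/

namespace MeasureTheory

variable {Ω : Type*} {m0 : MeasurableSpace Ω} {μ : Measure Ω}

def Filtration.shift (ℱ : Filtration ℕ m0) (k : ℕ) : Filtration ℕ m0 where
  seq n := ℱ (n + k)
  mono' _ _ h := ℱ.mono (Nat.add_le_add_right h k)
  le' n := ℱ.le (n + k)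

variable {ℱ : Filtration ℕ m0} {f B : ℕ → Ω → ℝ}

theorem stoppedProcess_leastGE_le (hf0 : f 0 = 0) (hfB : ∀ᵐ ω ∂μ, ∀ n, f (n + 1) ω ≤ B n ω)
    {r : ℝ} (hr : 0 ≤ r) (i : ℕ) : ∀ᵐ ω ∂μ, stoppedProcess f (leastGE B r) i ω ≤ r := by
  filter_upwards [hfB] with ω hfBω
  obtain ⟨j, hj⟩ : ∃ j : ℕ, (j : WithTop ℕ) = min (i : WithTop ℕ) (leastGE B r ω) :=
    WithTop.ne_top_iff_exists.1 (ne_top_of_le_ne_top WithTop.coe_ne_top (min_le_left _ _))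
  have hj_le : (j : WithTop ℕ) ≤ leastGE B r ω := hj ▸ min_le_right _ _
  -- `stoppedProcess` is stated with the lattice `min` of `WithTop ℕ`, not the linear-order one
  change f (WithTop.untopA (min (i : WithTop ℕ) (leastGE B r ω))) ω ≤ r
  rw [← hj]
  rcases j with _ | k
  · simpa [hf0] using hr
  · have hBk : B k ω < r := by
      simpa using notMem_of_lt_hittingAfter
        ((WithTop.coe_lt_coe.2 k.lt_add_one).trans_le hj_le) (Nat.zero_le k)
    exact (hfBω k).trans hBk.le

theorem Submartingale.exists_tendsto_of_le_predictable_of_zero [IsFiniteMeasure μ]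
    (hf : Submartingale f ℱ μ) (hf0 : f 0 = 0) (hB : Adapted ℱ B)
    (hfB : ∀ᵐ ω ∂μ, ∀ n, f (n + 1) ω ≤ B n ω) :
    ∀ᵐ ω ∂μ, BddAbove (Set.range fun n => B n ω) → ∃ c, Tendsto (fun n => f n ω) atTop (𝓝 c) := by
  have hstop (r : ℝ) : Submartingale (stoppedProcess f (leastGE B r)) ℱ μ :=
    hf.stoppedProcess (hB.isStoppingTime_hittingAfter measurableSet_Ici)
  have hbdd (r : ℝ) (hr : 0 ≤ r) (i : ℕ) : eLpNorm (stoppedProcess f (leastGE B r) i) 1 μ ≤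
      (2 * μ Set.univ * ENNReal.ofReal r).toNNReal := by
    rw [ENNReal.coe_toNNReal (by finiteness)]
    refine eLpNorm_one_le_of_le' ((hstop r).integrable i) ?_
      (stoppedProcess_leastGE_le hf0 hfB hr i)
    rw [← setIntegral_univ]
    refine le_trans ?_ ((hstop r).setIntegral_le (Nat.zero_le i) MeasurableSet.univ)
    simp [stoppedProcess, hf0]
  have hconv : ∀ᵐ ω ∂μ, ∀ i : ℕ,
      ∃ c, Tendsto (fun n => stoppedProcess f (leastGE B i) n ω) atTop (𝓝 c) :=
    ae_all_iff.2 fun i => (hstop i).exists_ae_tendsto_of_bdd (hbdd i i.cast_nonneg)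
  filter_upwards [hconv] with ω hω ⟨b, hb⟩
  obtain ⟨i, hi⟩ := exists_nat_gt b
  have hnever : leastGE B i ω = ⊤ :=
    hittingAfter_eq_top_iff.2 fun n _ => by simpa using (hb ⟨n, rfl⟩).trans_lt hi
  exact (hω i).imp fun c hc =>
    hc.congr fun n => stoppedProcess_eq_of_le (hnever ▸ le_top)

theorem Submartingale.exists_tendsto_of_le_predictable [IsFiniteMeasure μ]
    (hf : Submartingale f ℱ μ) (hB : Adapted ℱ B) (hfB : ∀ᵐ ω ∂μ, ∀ n, f (n + 1) ω ≤ B n ω) :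
    ∀ᵐ ω ∂μ, BddAbove (Set.range fun n => B n ω) → ∃ c, Tendsto (fun n => f n ω) atTop (𝓝 c) := by
  have hf0_meas : Measurable[ℱ 0] (f 0) := hf.stronglyAdapted.adapted 0
  have hg : Submartingale (fun n => f n - f 0) ℱ μ :=
    hf.sub_martingale (martingale_const_fun _ _ (hf.stronglyAdapted 0) (hf.integrable 0))
  have hB' : Adapted ℱ fun n => B n - f 0 :=
    fun n => (hB n).sub (hf0_meas.mono (ℱ.mono (Nat.zero_le n)) le_rfl)
  have hgB : ∀ᵐ ω ∂μ, ∀ n, f (n + 1) ω - f 0 ω ≤ B n ω - f 0 ω := by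
    filter_upwards [hfB] with ω hω n using sub_le_sub_right (hω n) _
  filter_upwards [hg.exists_tendsto_of_le_predictable_of_zero (sub_self _) hB' hgB]
    with ω hω ⟨b, hb⟩
  obtain ⟨c, hc⟩ := hω ⟨b - f 0 ω, by
    rintro _ ⟨n, rfl⟩
    exact sub_le_sub_right (hb ⟨n, rfl⟩) _⟩
  exact ⟨c + f 0 ω, by simpa using hc.add_const (f 0 ω)⟩

theorem supermartingale_sub_sum_of_condExp_le [IsFiniteMeasure μ] {a : ℕ → Ω → ℝ}
    (hf : Adapted ℱ f) (ha : Adapted ℱ a) (hf_int : ∀ n, Integrable (f n) μ)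
    (ha_int : ∀ n, Integrable (a n) μ) (hle : ∀ n, μ[f (n + 1) | ℱ n] ≤ᵐ[μ] f n + a n) :
    Supermartingale (fun n => f n - ∑ i ∈ Finset.range n, a i) ℱ μ := by
  have hS_meas (n m : ℕ) (h : n ≤ m + 1) :
      StronglyMeasurable[ℱ m] (∑ i ∈ Finset.range n, a i) :=
    Finset.stronglyMeasurable_sum _ fun i hi =>
      ((ha i).mono (ℱ.mono (by grind)) le_rfl).stronglyMeasurable
  have hS_int (n : ℕ) : Integrable (∑ i ∈ Finset.range n, a i) μ :=
    integrable_finsetSum' _ fun i _ => ha_int i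
  refine supermartingale_nat (fun n => (hf n).stronglyMeasurable.sub (hS_meas n n n.le_succ))
    (fun n => (hf_int n).sub (hS_int n)) fun n => ?_
  have hcond : μ[f (n + 1) - ∑ i ∈ Finset.range (n + 1), a i | ℱ n]
      =ᵐ[μ] μ[f (n + 1) | ℱ n] - ∑ i ∈ Finset.range (n + 1), a i := by
    refine (condExp_sub (hf_int _) (hS_int _) _).trans ?_
    rw [condExp_of_stronglyMeasurable (ℱ.le n) (hS_meas (n + 1) n le_rfl) (hS_int (n + 1))]
  filter_upwards [hcond, hle n] with ω hcondω hleω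
  rw [hcondω]
  simp only [Pi.sub_apply, Pi.add_apply, Finset.sum_apply, Finset.sum_range_succ] at hleω ⊢
  linarith

theorem ae_exists_tendsto_of_condExp_le_add [IsFiniteMeasure μ] {a : ℕ → Ω → ℝ}
    (hf_nonneg : ∀ n ω, 0 ≤ f n ω) (hf : Adapted ℱ f) (ha : Adapted ℱ a)
    (hf_int : ∀ n, Integrable (f n) μ) (ha_int : ∀ n, Integrable (a n) μ)
    (hle : ∀ n, μ[f (n + 1) | ℱ n] ≤ᵐ[μ] f n + a n) (hsum : ∀ᵐ ω ∂μ, Summable fun i => a i ω) :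
    ∀ᵐ ω ∂μ, ∃ l, Tendsto (fun n => f n ω) atTop (𝓝 l) := by
  have hsub : Submartingale (fun n => ∑ i ∈ Finset.range n, a i - f n) ℱ μ := by
    simpa only [Pi.neg_def, neg_sub] using
      (supermartingale_sub_sum_of_condExp_le hf ha hf_int ha_int hle).neg
  have hB : Adapted ℱ fun n ω => ∑ i ∈ Finset.range (n + 1), a i ω := fun n =>
    Finset.measurable_sum _ fun i hi =>
      (ha i).mono (ℱ.mono (Finset.mem_range_succ_iff.1 hi)) le_rfl
  have hsub_le : ∀ᵐ ω ∂μ, ∀ n,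
      (∑ i ∈ Finset.range (n + 1), a i) ω - f (n + 1) ω ≤ ∑ i ∈ Finset.range (n + 1), a i ω :=
    ae_of_all _ fun ω n => by simp only [Finset.sum_apply]; linarith [hf_nonneg (n + 1) ω]
  filter_upwards [hsub.exists_tendsto_of_le_predictable hB hsub_le, hsum] with ω hω hsumω
  have hS := hsumω.hasSum.tendsto_sum_nat
  obtain ⟨c, hc⟩ := hω (hS.comp (tendsto_add_atTop_nat 1)).bddAbove_range
  exact ⟨_, (hS.sub hc).congr fun n => by simp⟩

end MeasureTheory

theorem stmt0_general {Ω : Type*} {m0 : MeasurableSpace Ω} {μ : Measure Ω} [IsProbabilityMeasure μ]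
    (ℱ : Filtration ℕ m0) (f a : ℕ → Ω → ℝ)
    (hf_nonneg : ∀ k ω, 0 ≤ f k ω)
    (hf_adapted : Adapted ℱ f) (ha_adapted : Adapted ℱ a)
    (hf_int : ∀ k, Integrable (f k) μ) (ha_int : ∀ k, Integrable (a k) μ)
    (hle : ∀ k, 1 ≤ k → μ[f (k + 1) | ℱ k] ≤ᵐ[μ] f k + a k)
    (hsum : ∀ᵐ ω ∂μ, Summable fun i => a i ω) :
    ∀ᵐ ω ∂μ, ∃ l : ℝ, Tendsto (fun k => f k ω) atTop (nhds l) := by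
  have hconv := ae_exists_tendsto_of_condExp_le_add (ℱ := ℱ.shift 1) (μ := μ)
    (fun n => hf_nonneg (n + 1)) (fun n => hf_adapted (n + 1)) (fun n => ha_adapted (n + 1))
    (fun n => hf_int (n + 1)) (fun n => ha_int (n + 1)) (fun n => hle (n + 1) n.succ_pos)
    (hsum.mono fun ω h => (summable_nat_add_iff 1).2 h)
  filter_upwards [hconv] with ω ⟨l, hl⟩
  exact ⟨l, (tendsto_add_atTop_iff_nat 1).1 hl⟩

/-- Nonnegative almost-supermartingale convergence theorem (no multiplicative
perturbation): if `E[f (k+1) | ℱ k] ≤ f k + a k` a.s. for all `k ≥ 1` and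
`∑ a i < ∞` a.s., then `f k` converges a.s. to a finite limit. -/
theorem stmt0 {Ω : Type*} {m0 : MeasurableSpace Ω} {μ : Measure Ω} [IsProbabilityMeasure μ]
    (ℱ : Filtration ℕ m0) (f a : ℕ → Ω → ℝ)
    (hf_nonneg : ∀ k ω, 0 ≤ f k ω) (ha_nonneg : ∀ k ω, 0 ≤ a k ω)
    (hf_adapted : Adapted ℱ f) (ha_adapted : Adapted ℱ a)
    (hf_int : ∀ k, Integrable (f k) μ) (ha_int : ∀ k, Integrable (a k) μ)
    (hle : ∀ k, 1 ≤ k → μ[f (k + 1) | ℱ k] ≤ᵐ[μ] f k + a k)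
    (hsum : ∀ᵐ ω ∂μ, Summable fun i => a i ω) :
    ∀ᵐ ω ∂μ, ∃ l : ℝ, Tendsto (fun k => f k ω) atTop (nhds l) :=
  stmt0_general ℱ f a hf_nonneg hf_adapted ha_adapted hf_int ha_int hle hsum
end

section
/- Suppose $w$ has a distribution admitting a continuous, everywhere positive density $f$ on $\mathbb{R}$ (e.g. $w \sim N(0, \sigma^2)$ with $\sigma > 0$), and let $S(x) = \max(L, \min(x, N))$ with $L < N$, $G(x) = E[S(x+w)]$. Then $G$ is continuously differentiable with $G'(x) = P(L - x \le w \le N - x) = F(N-x) - F(L-x) > 0$ for every $x$, where $F$ is the CDF of $w$; moreover for any constant $C>0$, $\inf_{|x| \le C} G'(x) > 0$ and $\sup_{|x|\le C} G'(x) \le 1$. -/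
/-!
Differentiating under the integral sign, which is legitimate because `x ↦ S (x + w)` is
1-Lipschitz, gives `G'(x) = E[S'(x + w)] = P(L - x < w < N - x)`; the two kinks of `S` are
harmless because `w` has no atoms. The density turns this probability into
`∫_{L-x}^{N-x} f = F (N - x) - F (L - x)`, which is positive since `f` is, continuous in `x`
since `F` is, and at most `1` as a probability. A continuous positive function is bounded
below by a positive constant on the compact set `[-C, C]`.
-/

open MeasureTheory Set Topology

lemma hasDerivAt_max_min_of_ne {L N y : ℝ} (hL : y ≠ L) (hN : y ≠ N) :
    HasDerivAt (fun y => max L (min y N)) ((Ioo L N).indicator 1 y) y := by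
  rcases hL.lt_or_gt with hyL | hLy
  · have hconst : (fun y => max L (min y N)) =ᶠ[𝓝 y] fun _ => L := by
      filter_upwards [Iio_mem_nhds hyL] with z hz
      exact max_eq_left ((min_le_left _ _).trans hz.le)
    rw [indicator_of_notMem fun h => h.1.not_gt hyL]
    exact (hasDerivAt_const y L).congr_of_eventuallyEq hconst
  rcases hN.lt_or_gt with hyN | hNy
  · have hid : (fun y => max L (min y N)) =ᶠ[𝓝 y] id := by
      filter_upwards [Ioo_mem_nhds hLy hyN] with z hz
      rw [min_eq_left hz.2.le, max_eq_right hz.1.le, id]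
    rw [indicator_of_mem (show y ∈ Ioo L N from ⟨hLy, hyN⟩)]
    exact (hasDerivAt_id y).congr_of_eventuallyEq hid
  · have hconst : (fun y => max L (min y N)) =ᶠ[𝓝 y] fun _ => max L N := by
      filter_upwards [Ioi_mem_nhds hNy] with z hz
      rw [min_eq_right hz.le]
    rw [indicator_of_notMem fun h => h.2.not_gt hNy]
    exact (hasDerivAt_const y _).congr_of_eventuallyEq hconst

lemma lipschitzWith_max_min (L N : ℝ) : LipschitzWith 1 fun y : ℝ => max L (min y N) :=
  (LipschitzWith.id.min_const N).const_max L

lemma abs_max_min_le (L N y : ℝ) : |max L (min y N)| ≤ max |L| |max L N| :=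
  abs_le_max_abs_abs (le_max_left _ _) (max_le_max le_rfl (min_le_right _ _))

theorem hasDerivAt_integral_max_min_add {Ω : Type*} {_ : MeasurableSpace Ω} {μ : Measure Ω}
    [IsFiniteMeasure μ] {w : Ω → ℝ} (hw : Measurable w) (L N x : ℝ)
    (hL : μ (w ⁻¹' {L - x}) = 0) (hN : μ (w ⁻¹' {N - x}) = 0) :
    HasDerivAt (fun y => ∫ ω, max L (min (y + w ω) N) ∂μ)
      (μ.real (w ⁻¹' Ioo (L - x) (N - x))) x := by
  have hshift : (fun ω => x + w ω) ⁻¹' Ioo L N = w ⁻¹' Ioo (L - x) (N - x) := by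
    ext ω; simp only [mem_preimage, mem_Ioo, sub_lt_iff_lt_add', lt_sub_iff_add_lt']
  have hmeas : ∀ y, AEStronglyMeasurable (fun ω => max L (min (y + w ω) N)) μ := fun y =>
    ((lipschitzWith_max_min L N).continuous.measurable.comp
      (measurable_const.add hw)).aestronglyMeasurable
  have hlip : ∀ ω, LipschitzOnWith (Real.nnabs 1) (fun y => max L (min (y + w ω) N)) univ := by
    intro ω
    rw [map_one]
    simpa only [mul_one, Function.comp_def] using
      ((lipschitzWith_max_min L N).comp (isometry_add_right (w ω)).lipschitz).lipschitzOnWith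
  have hderiv : ∀ᵐ ω ∂μ, HasDerivAt (fun y => max L (min (y + w ω) N))
      ((w ⁻¹' Ioo (L - x) (N - x)).indicator 1 ω) x := by
    filter_upwards [measure_eq_zero_iff_ae_notMem.1 hL, measure_eq_zero_iff_ae_notMem.1 hN]
      with ω hωL hωN
    rw [← hshift]
    refine (hasDerivAt_max_min_of_ne ?_ ?_).comp_add_const x (w ω)
    · exact fun h => hωL (by simp [← h])
    · exact fun h => hωN (by simp [← h])
  have hdom := (hasDerivAt_integral_of_dominated_loc_of_lip Filter.univ_mem (.of_forall hmeas)
    (.of_bound (hmeas x) _ (.of_forall fun ω => abs_max_min_le L N (x + w ω)))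
    ((measurable_one.indicator (hw measurableSet_Ioo)).aestronglyMeasurable)
    (.of_forall hlip) (integrable_const 1) hderiv).2
  rwa [integral_indicator_one (hw measurableSet_Ioo)] at hdom

section Density

variable {Ω : Type*} {_ : MeasurableSpace Ω} {μ : Measure Ω} {w : Ω → ℝ} {f : ℝ → ℝ}

lemma measure_preimage_singleton_eq_zero_of_map_eq_withDensity (hw : Measurable w)
    (hdensity : μ.map w = volume.withDensity fun t => ENNReal.ofReal (f t)) (c : ℝ) :
    μ (w ⁻¹' {c}) = 0 := by
  rw [← Measure.map_apply hw (measurableSet_singleton c), hdensity]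
  exact withDensity_absolutelyContinuous _ _ Real.volume_singleton

lemma measureReal_preimage_eq_setIntegral_of_map_eq_withDensity (hw : Measurable w)
    (hdensity : μ.map w = volume.withDensity fun t => ENNReal.ofReal (f t))
    (hf_meas : Measurable f) (hf_nonneg : ∀ t, 0 ≤ f t) {s : Set ℝ} (hs : MeasurableSet s) :
    μ.real (w ⁻¹' s) = ∫ t in s, f t := by
  rw [measureReal_def, ← Measure.map_apply hw hs, hdensity, withDensity_apply _ hs,
    integral_eq_lintegral_of_nonneg_ae (.of_forall hf_nonneg) hf_meas.aestronglyMeasurable]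

lemma integrable_of_map_eq_withDensity [IsFiniteMeasure μ]
    (hdensity : μ.map w = volume.withDensity fun t => ENNReal.ofReal (f t))
    (hf_meas : Measurable f) (hf_nonneg : ∀ t, 0 ≤ f t) : Integrable f := by
  refine ⟨hf_meas.aestronglyMeasurable,
    (hasFiniteIntegral_iff_ofReal (.of_forall hf_nonneg)).2 ?_⟩
  rw [← setLIntegral_univ, ← withDensity_apply _ .univ, ← hdensity]
  exact measure_lt_top _ _

lemma measureReal_preimage_Iic_sub_Iic_of_map_eq_withDensity [IsFiniteMeasure μ]
    (hw : Measurable w) (hdensity : μ.map w = volume.withDensity fun t => ENNReal.ofReal (f t))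
    (hf_meas : Measurable f) (hf_nonneg : ∀ t, 0 ≤ f t) (a b : ℝ) :
    μ.real (w ⁻¹' Iic b) - μ.real (w ⁻¹' Iic a) = ∫ t in a..b, f t := by
  have hf := integrable_of_map_eq_withDensity hdensity hf_meas hf_nonneg
  simp only [measureReal_preimage_eq_setIntegral_of_map_eq_withDensity hw hdensity hf_meas
    hf_nonneg measurableSet_Iic]
  exact intervalIntegral.integral_Iic_sub_Iic hf.integrableOn hf.integrableOn

lemma measureReal_preimage_Ioo_of_map_eq_withDensity (hw : Measurable w)
    (hdensity : μ.map w = volume.withDensity fun t => ENNReal.ofReal (f t))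
    (hf_meas : Measurable f) (hf_nonneg : ∀ t, 0 ≤ f t) {a b : ℝ} (hab : a ≤ b) :
    μ.real (w ⁻¹' Ioo a b) = ∫ t in a..b, f t := by
  rw [measureReal_preimage_eq_setIntegral_of_map_eq_withDensity hw hdensity hf_meas hf_nonneg
    measurableSet_Ioo, intervalIntegral.integral_of_le hab, integral_Ioc_eq_integral_Ioo]

end Density

lemma continuous_of_forall_sub_eq_intervalIntegral {F f : ℝ → ℝ}
    (hf : ∀ a b, IntervalIntegrable f volume a b) (hF : ∀ a b, F b - F a = ∫ t in a..b, f t) :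
    Continuous F := by
  have hprim : F = fun x => F 0 + ∫ t in (0 : ℝ)..x, f t := funext fun x => by
    rw [← hF]; ring
  rw [hprim]
  exact continuous_const.add (intervalIntegral.continuous_primitive hf 0)

lemma IsCompact.exists_pos_forall_le {X : Type*} [TopologicalSpace X] {K : Set X}
    (hK : IsCompact K) {g : X → ℝ} (hg : ContinuousOn g K) (hpos : ∀ x ∈ K, 0 < g x) :
    ∃ c > 0, ∀ x ∈ K, c ≤ g x := by
  rcases K.eq_empty_or_nonempty with rfl | hne
  · exact ⟨1, one_pos, by simp⟩
  · obtain ⟨x₀, hx₀, hmin⟩ := hK.exists_isMinOn hne hg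
    exact ⟨g x₀, hpos x₀ hx₀, hmin⟩

/-- If `w` has a continuous, everywhere positive density `f` on `ℝ`, and
`S x = max L (min x N)`, `G x = E[S (x+w)]`, `F` the CDF of `w`, then `G` is
differentiable with `G'(x) = F (N - x) - F (L - x) > 0`, `G'` is continuous,
and for every `C > 0`, `inf_{|x| ≤ C} G'(x) > 0` and `sup_{|x| ≤ C} G'(x) ≤ 1`. -/
theorem stmt7 {Ω : Type*} {m0 : MeasurableSpace Ω} {μ : Measure Ω} [IsProbabilityMeasure μ]
    (w : Ω → ℝ) (hw : Measurable w) (f : ℝ → ℝ)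
    (hf_cont : Continuous f) (hf_pos : ∀ x, 0 < f x)
    (hdensity : Measure.map w μ
      = MeasureTheory.volume.withDensity fun x => ENNReal.ofReal (f x))
    (L N : ℝ) (hLN : L < N) (S G F : ℝ → ℝ)
    (hS : ∀ x, S x = max L (min x N))
    (hG : ∀ x, G x = ∫ ω, S (x + w ω) ∂μ)
    (hF : ∀ x, F x = (μ {ω | w ω ≤ x}).toReal) :
    (∀ x, HasDerivAt G (F (N - x) - F (L - x)) x) ∧
    Continuous (deriv G) ∧
    (∀ x, 0 < F (N - x) - F (L - x)) ∧
    (∀ C : ℝ, 0 < C →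
      (∃ c > 0, ∀ x, |x| ≤ C → c ≤ deriv G x) ∧ ∀ x, |x| ≤ C → deriv G x ≤ 1) := by
  have hf_nonneg t := (hf_pos t).le
  have hFsub a b : F b - F a = ∫ t in a..b, f t := by
    simp only [hF]
    exact measureReal_preimage_Iic_sub_Iic_of_map_eq_withDensity hw hdensity
      hf_cont.measurable hf_nonneg a b
  have hFprob x : F (N - x) - F (L - x) = μ.real (w ⁻¹' Ioo (L - x) (N - x)) := by
    rw [hFsub, measureReal_preimage_Ioo_of_map_eq_withDensity hw hdensity hf_cont.measurable
      hf_nonneg (by linarith)]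
  have hG' x : HasDerivAt G (F (N - x) - F (L - x)) x := by
    rw [funext hG, hFprob]
    simp only [hS]
    exact hasDerivAt_integral_max_min_add hw L N x
      (measure_preimage_singleton_eq_zero_of_map_eq_withDensity hw hdensity _)
      (measure_preimage_singleton_eq_zero_of_map_eq_withDensity hw hdensity _)
  have hderiv : deriv G = fun x => F (N - x) - F (L - x) := funext fun x => (hG' x).deriv
  have hF_cont : Continuous F := continuous_of_forall_sub_eq_intervalIntegral
    (fun _ _ => hf_cont.intervalIntegrable _ _) hFsub
  have hcont : Continuous (deriv G) := by rw [hderiv]; fun_prop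
  have hpos x : 0 < F (N - x) - F (L - x) := by
    rw [hFsub]
    exact intervalIntegral.intervalIntegral_pos_of_pos (hf_cont.intervalIntegrable _ _) hf_pos
      (by linarith)
  refine ⟨hG', hcont, hpos, fun C _ => ⟨?_, fun x _ => ?_⟩⟩
  · obtain ⟨c, hc, hle⟩ := (isCompact_Icc (a := -C) (b := C)).exists_pos_forall_le
      hcont.continuousOn fun x _ => hderiv ▸ hpos x
    exact ⟨c, hc, fun x hx => hle x (abs_le.1 hx)⟩
  · simp only [hderiv, hFprob]
    exact measureReal_le_one
end
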